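/- The spin-s curvature tensor is gauge invariant: for any smooth symmetric rank-s tensor field φ and any smooth symmetric rank-(s−1) tensor field ε on D-dimensional Minkowski spacetime, the spin-s curvature K = 2^s Y^s(∂^s φ) satisfies K(φ + s∂_{(μ_1}ε_{μ_2...μ_s)}) = K(φ), i.e. the curvature of the pure-gauge configuration s∂_{(μ_1}ε_{μ_2...μ_s)} vanishes identically. -/

import Mathlib

/-!
STATEMENT 12.  The spin-`s` curvature tensor is gauge invariant: for any
smooth symmetric rank-`s` tensor field `φ` and any smooth symmetric
rank-`(s−1)` tensor field `ε` on `D`-dimensional Minkowski spacetime, the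
spin-`s` curvature `K = 2^s Y^s(∂^s φ)` satisfies
`K(φ + s ∂_{(μ₁}ε_{μ₂...μ_s)}) = K(φ)`, i.e. the curvature of the pure-gauge
configuration `s ∂_{(μ₁}ε_{μ₂...μ_s)}` vanishes identically.
-/
noncomputable section

open scoped BigOperators

/-- A point of `D`-dimensional Minkowski spacetime. -/
abbrev Pt (D : ℕ) : Type := Fin D → ℝ

/-- A rank-`n` covariant tensor field on `D`-dimensional Minkowski spacetime,
given by its components. -/
abbrev TF (D n : ℕ) : Type := Pt D → (Fin n → Fin D) → ℝ

/-- The components of the flat Minkowski metric `η = diag(−1,1,…,1)` (mostly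
plus signature); numerically the inverse metric has the same components, so
`mink` is also used to raise and contract indices. -/
def mink (D : ℕ) (a b : Fin D) : ℝ :=
  if a = b then (if (a : ℕ) = 0 then -1 else 1) else 0

/-- The partial derivative `∂_a f` of a scalar function on spacetime. -/
def pd {D : ℕ} (a : Fin D) (f : Pt D → ℝ) : Pt D → ℝ :=
  fun x => fderiv ℝ f x (Pi.single a 1)

/-- Iterated partial derivative along a list of directions. -/
def pdList {D : ℕ} : List (Fin D) → (Pt D → ℝ) → Pt D → ℝ
  | [], f => f
  | a :: l, f => pd a (pdList l f)

/-- Smoothness of all components of a tensor field. -/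
def SmoothTF {D n : ℕ} (T : TF D n) : Prop :=
  ∀ idx : Fin n → Fin D, ContDiff ℝ (⊤ : ℕ∞) (fun x => T x idx)

/-- Total symmetry of a tensor field in all of its indices. -/
def SymTF {D n : ℕ} (T : TF D n) : Prop :=
  ∀ (x : Pt D) (σ : Equiv.Perm (Fin n)) (idx : Fin n → Fin D),
    T x (idx ∘ σ) = T x idx

/-- Remove the `i`-th entry of an index tuple. -/
def removeAt {n : ℕ} {α : Type} (i : Fin n) (idx : Fin n → α) :
    Fin (n - 1) → α :=
  fun k => idx (if _ : (k : ℕ) < (i : ℕ)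
    then ⟨k, by have := i.isLt; omega⟩
    else ⟨(k : ℕ) + 1, by have := k.isLt; omega⟩)

/-- The strictly monotone map `Fin (n-2) → Fin n` skipping positions `i ≠ j`. -/
def skip2 {n : ℕ} (i j : Fin n) (k : Fin (n - 2)) : Fin n :=
  if _ : (k : ℕ) < min (i : ℕ) (j : ℕ) then
    ⟨k, by have := i.isLt; have := j.isLt; omega⟩
  else if _ : (k : ℕ) + 1 < max (i : ℕ) (j : ℕ) then
    ⟨(k : ℕ) + 1, by have := i.isLt; have := j.isLt; omega⟩
  else ⟨(k : ℕ) + 2, by have := k.isLt; omega⟩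

/-- Remove the `i`-th and `j`-th entries (`i ≠ j`) of an index tuple. -/
def removeAt2 {n : ℕ} {α : Type} (i j : Fin n) (idx : Fin n → α) :
    Fin (n - 2) → α :=
  fun k => idx (skip2 i j k)

/-- Prepend one index to an index tuple. -/
def push1 {D n : ℕ} (a : Fin D) (idx : Fin (n - 1) → Fin D) : Fin n → Fin D :=
  fun i => if _ : (i : ℕ) = 0 then a
    else idx ⟨(i : ℕ) - 1, by have := i.isLt; omega⟩

/-- Prepend two indices to an index tuple. -/
def push2 {D n : ℕ} (a b : Fin D) (idx : Fin (n - 2) → Fin D) :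
    Fin n → Fin D :=
  fun i => if _ : (i : ℕ) = 0 then a
    else if _ : (i : ℕ) = 1 then b
    else idx ⟨(i : ℕ) - 2, by have := i.isLt; omega⟩

/-- The trace `T'` of a tensor field: contraction of two indices with the
(inverse) Minkowski metric.  (Defined to vanish on tensors of rank `< 2`.) -/
def traceTF {D n : ℕ} (T : TF D n) : TF D (n - 2) :=
  fun x idx => if 2 ≤ n then
    ∑ a : Fin D, ∑ b : Fin D, mink D a b * T x (push2 a b idx)
  else 0

/-- The divergence `∂·T` of a tensor field.  (Vanishes on rank `< 1`.) -/
def divTF {D n : ℕ} (T : TF D n) : TF D (n - 1) :=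
  fun x idx => if 1 ≤ n then
    ∑ a : Fin D, ∑ b : Fin D, mink D a b * pd a (fun y => T y (push1 b idx)) x
  else 0

/-- The d'Alembertian `□T = η^{ab} ∂_a ∂_b T`. -/
def boxTF {D n : ℕ} (T : TF D n) : TF D n :=
  fun x idx =>
    ∑ a : Fin D, ∑ b : Fin D, mink D a b * pd a (pd b (fun y => T y idx)) x

/-- The Fronsdal tensor of a symmetric rank-`s` tensor field,
`F = □φ − s ∂²_{ρ(μ₁} φ^ρ_{μ₂...μ_s)} + (s(s−1)/2) ∂²_{(μ₁μ₂} φ'_{μ₃...μ_s)}`;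
with strength-one conventions the second term is `∑_i ∂_{μ_i} (∂·φ)` and the
third is `∑_{i<j} ∂_{μ_i}∂_{μ_j} φ'`. -/
def Fronsdal {D s : ℕ} (φ : TF D s) : TF D s :=
  fun x idx =>
    boxTF φ x idx
    - ∑ i : Fin s, pd (idx i) (fun y => divTF φ y (removeAt i idx)) x
    + (1/2) * ∑ i : Fin s, ∑ j : Fin s,
        (if i ≠ j then
          pd (idx i) (pd (idx j) (fun y => traceTF φ y (removeAt2 i j idx))) x
        else 0)

/-- The sign `(−1)^{|ε|}` of a pair-swapping pattern. -/
def swapSign {s : ℕ} (ε : Fin s → Bool) : ℝ :=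
  ∏ i : Fin s, (if ε i then (-1 : ℝ) else 1)

/-- The spin-`s` curvature `K_{μ₁ν₁|...|μ_sν_s} = 2^s Y^s(∂^s_{μ₁...μ_s}
φ_{ν₁...ν_s})`, where `Y^s = 2^{-s} ∏ᵢ (e − (μᵢνᵢ))` antisymmetrizes over each
pair `(μᵢ, νᵢ)`.  It is written as a function of the `s` index pairs:
`curvK φ x p = ∑_{ε : Fin s → Bool} (−1)^{|ε|} ∂_{a₁}…∂_{a_s} φ_{b₁…b_s}` with
`(aᵢ, bᵢ) = p i` swapped when `ε i` holds. -/
def curvK {D s : ℕ} (φ : TF D s) : Pt D → (Fin s → Fin D × Fin D) → ℝ :=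
  fun x p => ∑ ε : Fin s → Bool, swapSign ε *
    pdList (List.ofFn (fun i => if ε i then (p i).2 else (p i).1))
      (fun y => φ y (fun i => if ε i then (p i).1 else (p i).2)) x

/-- The pure-gauge configuration `s ∂_{(μ₁} ε_{μ₂...μ_s)}` (with strength-one
symmetrization this is `∑_i ∂_{μ_i} ε_{(rest)}`). -/
def pureGauge {D s : ℕ} (ε : TF D (s - 1)) : TF D s :=
  fun x idx => ∑ i : Fin s, pd (idx i) (fun y => ε y (removeAt i idx)) x

section Aux
variable {D : ℕ}

lemma pd_contDiff {f : Pt D → ℝ} (hf : ContDiff ℝ (⊤ : ℕ∞) f) (a : Fin D) :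
    ContDiff ℝ (⊤ : ℕ∞) (pd a f) :=
  (ContinuousLinearMap.apply ℝ ℝ (Pi.single a 1 : Pt D)).contDiff.comp
    (hf.fderiv_right (by simp))

lemma pdList_contDiff (L : List (Fin D)) {f : Pt D → ℝ} (hf : ContDiff ℝ (⊤ : ℕ∞) f) :
    ContDiff ℝ (⊤ : ℕ∞) (pdList L f) := by
  induction L with
  | nil => exact hf
  | cons a L ih => exact pd_contDiff ih a

lemma pd_comm {f : Pt D → ℝ} (hf : ContDiff ℝ (⊤ : ℕ∞) f) (a b : Fin D) (x : Pt D) :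
    pd a (pd b f) x = pd b (pd a f) x := by
  have hdf : ContDiff ℝ (⊤ : ℕ∞) (fderiv ℝ f) := hf.fderiv_right (by simp)
  have key : ∀ (v w : Pt D), fderiv ℝ (fun y => fderiv ℝ f y w) x v
      = fderiv ℝ (fderiv ℝ f) x v w := by
    intro v w
    rw [fderiv_clm_apply (hdf.differentiable (by simp) x) (differentiableAt_const w)]
    simp
  have hs : IsSymmSndFDerivAt ℝ f x := hf.contDiffAt.isSymmSndFDerivAt (by rw [minSmoothness_of_isRCLikeNormedField]; exact WithTop.coe_le_coe.mpr le_top)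
  show fderiv ℝ (fun y => fderiv ℝ f y (Pi.single b 1)) x (Pi.single a 1)
      = fderiv ℝ (fun y => fderiv ℝ f y (Pi.single a 1)) x (Pi.single b 1)
  rw [key, key]
  exact hs _ _

lemma pd_sum {ι : Type} (S : Finset ι) (f : ι → Pt D → ℝ)
    (hf : ∀ i ∈ S, ContDiff ℝ (⊤ : ℕ∞) (f i)) (a : Fin D) (x : Pt D) :
    pd a (fun y => ∑ i ∈ S, f i y) x = ∑ i ∈ S, pd a (f i) x := by
  unfold pd
  rw [fderiv_fun_sum (fun i hi => ((hf i hi).differentiable (by simp) x))]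
  simp

lemma pdList_sum {ι : Type} (S : Finset ι) (L : List (Fin D)) (f : ι → Pt D → ℝ)
    (hf : ∀ i ∈ S, ContDiff ℝ (⊤ : ℕ∞) (f i)) :
    pdList L (fun y => ∑ i ∈ S, f i y) = fun x => ∑ i ∈ S, pdList L (f i) x := by
  induction L with
  | nil => rfl
  | cons a L ih =>
    show pd a (pdList L fun y => ∑ i ∈ S, f i y) = _
    rw [ih]
    funext x
    exact pd_sum S (fun i => pdList L (f i)) (fun i hi => pdList_contDiff L (hf i hi)) a x

lemma pdList_add (L : List (Fin D)) {f g : Pt D → ℝ} (hf : ContDiff ℝ (⊤ : ℕ∞) f)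
    (hg : ContDiff ℝ (⊤ : ℕ∞) g) :
    pdList L (fun y => f y + g y) = fun x => pdList L f x + pdList L g x := by
  induction L with
  | nil => rfl
  | cons a L ih =>
    show pd a (pdList L fun y => f y + g y) = _
    rw [ih]
    funext x
    unfold pd
    rw [fderiv_fun_add ((pdList_contDiff L hf).differentiable (by simp) x)
      ((pdList_contDiff L hg).differentiable (by simp) x)]
    rfl

lemma pd_pdList (L : List (Fin D)) {f : Pt D → ℝ} (hf : ContDiff ℝ (⊤ : ℕ∞) f) (a : Fin D) :
    pdList L (pd a f) = pd a (pdList L f) := by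
  induction L with
  | nil => rfl
  | cons b L ih =>
    show pd b (pdList L (pd a f)) = pd a (pd b (pdList L f))
    rw [ih]
    funext x
    exact pd_comm (pdList_contDiff L hf) b a x

lemma pdList_extract (L1 L2 : List (Fin D)) (a : Fin D) {f : Pt D → ℝ}
    (hf : ContDiff ℝ (⊤ : ℕ∞) f) :
    pdList (L1 ++ a :: L2) f = pdList (L1 ++ L2) (pd a f) := by
  induction L1 with
  | nil =>
    show pd a (pdList L2 f) = pdList L2 (pd a f)
    exact (pd_pdList L2 hf a).symm
  | cons b L1 ih =>
    show pd b (pdList (L1 ++ a :: L2) f) = pd b (pdList (L1 ++ L2) (pd a f))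
    rw [ih]

lemma ofFn_eq_take_cons_drop {s : ℕ} {α : Type} (g : Fin s → α) (i : Fin s) :
    List.ofFn g = (List.ofFn g).take (i : ℕ) ++ g i :: (List.ofFn g).drop ((i : ℕ) + 1) := by
  have h : (i : ℕ) < (List.ofFn g).length := by simp [i.isLt]
  conv_lhs => rw [← List.take_append_drop (i : ℕ) (List.ofFn g)]
  rw [List.drop_eq_getElem_cons h]
  simp

lemma take_ofFn_congr {s : ℕ} {α : Type} {g g' : Fin s → α} (i : Fin s)
    (h : ∀ j : Fin s, (j : ℕ) < (i : ℕ) → g j = g' j) :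
    (List.ofFn g).take (i : ℕ) = (List.ofFn g').take (i : ℕ) := by
  apply List.ext_getElem (by simp)
  intro n h1 h2
  rw [List.length_take, List.length_ofFn] at h1
  rw [List.getElem_take, List.getElem_take, List.getElem_ofFn, List.getElem_ofFn]
  exact h ⟨n, by omega⟩ (by simp only [Fin.val_mk]; omega)

lemma drop_ofFn_congr {s : ℕ} {α : Type} {g g' : Fin s → α} (i : Fin s)
    (h : ∀ j : Fin s, (i : ℕ) < (j : ℕ) → g j = g' j) :
    (List.ofFn g).drop ((i : ℕ) + 1) = (List.ofFn g').drop ((i : ℕ) + 1) := by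
  apply List.ext_getElem (by simp)
  intro n h1 h2
  rw [List.getElem_drop, List.getElem_drop, List.getElem_ofFn, List.getElem_ofFn]
  exact h _ (by simp only [Fin.val_mk]; omega)

lemma removeAt_congr {n : ℕ} {α : Type} (i : Fin n) {idx idx' : Fin n → α}
    (h : ∀ j : Fin n, j ≠ i → idx j = idx' j) :
    removeAt i idx = removeAt i idx' := by
  funext k
  simp only [removeAt]
  split
  · next h1 => exact h _ (fun hc => by simp [Fin.ext_iff] at hc; omega)
  · next h1 => exact h _ (fun hc => by simp [Fin.ext_iff] at hc; omega)

lemma swapSign_update {s : ℕ} (η : Fin s → Bool) (i : Fin s) :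
    swapSign (Function.update η i (!η i)) = - swapSign η := by
  unfold swapSign
  have h : ∀ j : Fin s, (if Function.update η i (!η i) j then (-1:ℝ) else 1)
      = Function.update (fun j : Fin s => if η j then (-1:ℝ) else 1) i
          (if !η i then (-1:ℝ) else 1) j := by
    intro j
    by_cases hj : j = i
    · subst hj; simp
    · simp [Function.update_of_ne hj]
  rw [Finset.prod_congr rfl (fun j _ => h j),
    Finset.prod_update_of_mem (Finset.mem_univ i),
    Finset.prod_eq_mul_prod_sdiff_singleton_of_mem (Finset.mem_univ i)
      (fun j : Fin s => if η j then (-1:ℝ) else 1)]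
  cases hη : η i <;> simp [hη]

end Aux

/-- Direction indices of a summand of the curvature. -/
def dirF {D s : ℕ} (p : Fin s → Fin D × Fin D) (η : Fin s → Bool) : Fin s → Fin D :=
  fun i => if η i then (p i).2 else (p i).1

/-- Component indices of a summand of the curvature. -/
def cidxF {D s : ℕ} (p : Fin s → Fin D × Fin D) (η : Fin s → Bool) : Fin s → Fin D :=
  fun i => if η i then (p i).1 else (p i).2

lemma gauge_term {D s : ℕ} (ε : TF D (s - 1)) (hεsm : SmoothTF ε)
    (p : Fin s → Fin D × Fin D) (i : Fin s) (x : Pt D) (η : Fin s → Bool) :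
    swapSign η * pdList (List.ofFn (dirF p η))
        (pd (cidxF p η i) (fun z => ε z (removeAt i (cidxF p η)))) x
    + swapSign (Function.update η i (!η i)) *
        pdList (List.ofFn (dirF p (Function.update η i (!η i))))
          (pd (cidxF p (Function.update η i (!η i)) i)
            (fun z => ε z (removeAt i (cidxF p (Function.update η i (!η i)))))) x
    = 0 := by
  set η' := Function.update η i (!η i) with hη'
  have hηi : η' i = !η i := by rw [hη']; simp
  have hε0 : ContDiff ℝ (⊤ : ℕ∞) (fun z => ε z (removeAt i (cidxF p η))) := hεsm _
  have hrem : removeAt i (cidxF p η') = removeAt i (cidxF p η) :=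
    removeAt_congr i (fun j hj => by
      simp only [cidxF, hη', Function.update_of_ne hj])
  have htake : (List.ofFn (dirF p η')).take (i : ℕ) = (List.ofFn (dirF p η)).take (i : ℕ) :=
    take_ofFn_congr i (fun j hj => by
      have hne : j ≠ i := by intro hc; subst hc; omega
      simp only [dirF, hη', Function.update_of_ne hne])
  have hdrop : (List.ofFn (dirF p η')).drop ((i : ℕ) + 1)
      = (List.ofFn (dirF p η)).drop ((i : ℕ) + 1) :=
    drop_ofFn_congr i (fun j hj => by
      have hne : j ≠ i := by intro hc; subst hc; omega
      simp only [dirF, hη', Function.update_of_ne hne])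
  have hdir : dirF p η' i = cidxF p η i := by
    simp only [dirF, cidxF, hηi]; cases η i <;> simp
  have hcidx : cidxF p η' i = dirF p η i := by
    simp only [dirF, cidxF, hηi]; cases η i <;> simp
  have expand : ∀ (θ : Fin s → Bool) (c : Fin D) (f0 : Pt D → ℝ), ContDiff ℝ (⊤ : ℕ∞) f0 →
      pdList (List.ofFn (dirF p θ)) (pd c f0) x
      = pdList ((List.ofFn (dirF p θ)).take (i : ℕ) ++ (List.ofFn (dirF p θ)).drop ((i : ℕ) + 1))
          (pd (dirF p θ i) (pd c f0)) x := by
    intro θ c f0 hf0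
    conv_lhs => rw [ofFn_eq_take_cons_drop (dirF p θ) i]
    rw [pdList_extract _ _ _ (pd_contDiff hf0 c)]
  rw [hrem, expand η _ _ hε0, expand η' _ _ hε0, htake, hdrop, hdir, hcidx,
    swapSign_update]
  have hcomm : pd (cidxF p η i) (pd (dirF p η i) (fun z => ε z (removeAt i (cidxF p η))))
      = pd (dirF p η i) (pd (cidxF p η i) (fun z => ε z (removeAt i (cidxF p η)))) := by
    funext y; exact pd_comm hε0 _ _ y
  rw [hcomm]
  ring

/-- gauge invariance of the spin-`s` curvature. -/
theorem curvature_gauge_invariant (D s : ℕ) (φ : TF D s) (ε : TF D (s - 1))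
    (hφsym : SymTF φ) (hφsm : SmoothTF φ)
    (hεsym : SymTF ε) (hεsm : SmoothTF ε) :
    (∀ (x : Pt D) (p : Fin s → Fin D × Fin D),
      curvK (fun y idx => φ y idx + pureGauge (s := s) ε y idx) x p
        = curvK φ x p)
    ∧ (∀ (x : Pt D) (p : Fin s → Fin D × Fin D),
        curvK (pureGauge (s := s) ε) x p = 0) := by
  classical
  have hGsm : ∀ idx : Fin s → Fin D, ContDiff ℝ (⊤ : ℕ∞) (fun y => pureGauge (s := s) ε y idx) := by
    intro idx
    have : (fun y => pureGauge (s := s) ε y idx)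
        = fun y => ∑ i : Fin s, pd (idx i) (fun z => ε z (removeAt i idx)) y := rfl
    rw [this]
    exact ContDiff.sum fun i _ => pd_contDiff (hεsm _) _
  have key : ∀ (x : Pt D) (p : Fin s → Fin D × Fin D),
      curvK (pureGauge (s := s) ε) x p = 0 := by
    intro x p
    have step : curvK (pureGauge (s := s) ε) x p
        = ∑ η : Fin s → Bool, ∑ i : Fin s, swapSign η *
            pdList (List.ofFn (dirF p η))
              (pd (cidxF p η i) (fun z => ε z (removeAt i (cidxF p η)))) x := by
      unfold curvK
      apply Finset.sum_congr rfl
      intro η _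
      have h1 : (fun y => pureGauge (s := s) ε y (cidxF p η))
          = fun y => ∑ i : Fin s,
              pd (cidxF p η i) (fun z => ε z (removeAt i (cidxF p η))) y := rfl
      show swapSign η * pdList (List.ofFn (dirF p η))
          (fun y => pureGauge (s := s) ε y (cidxF p η)) x = _
      rw [h1, pdList_sum Finset.univ _ _ (fun i _ => pd_contDiff (hεsm _) _),
        Finset.mul_sum]
    rw [step, Finset.sum_comm]
    apply Finset.sum_eq_zero
    intro i _
    refine Finset.sum_involution (fun η _ => Function.update η i (!η i))
      (fun η _ => gauge_term ε hεsm p i x η)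
      (fun η _ _ hc => ?_) (fun η _ => Finset.mem_univ _) (fun η _ => ?_)
    · have := congrFun hc i
      simp at this
    · funext j
      by_cases hj : j = i
      · subst hj; simp
      · simp [Function.update_of_ne hj]
  refine ⟨fun x p => ?_, key⟩
  have add : curvK (fun y idx => φ y idx + pureGauge (s := s) ε y idx) x p
      = curvK φ x p + curvK (pureGauge (s := s) ε) x p := by
    unfold curvK
    rw [← Finset.sum_add_distrib]
    apply Finset.sum_congr rfl
    intro η _
    have h2 := pdList_add (List.ofFn (dirF p η))
      (hφsm (cidxF p η)) (hGsm (cidxF p η))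
    show swapSign η * pdList (List.ofFn (dirF p η))
          (fun y => φ y (cidxF p η) + pureGauge (s := s) ε y (cidxF p η)) x
        = swapSign η * pdList (List.ofFn (dirF p η)) (fun y => φ y (cidxF p η)) x
          + swapSign η * pdList (List.ofFn (dirF p η))
              (fun y => pureGauge (s := s) ε y (cidxF p η)) x
    rw [congrFun h2 x, mul_add]
  rw [add, key x p, add_zero]
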